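/- Let w ∈ W be rationally smooth (i.e. the rank generating function of the lower Bruhat interval [e,w] is palindromic) and let w = uv be a parabolic decomposition with u ∈ W_J the maximal element of W_J below w and v ∈ ᴶW. Then every simple reflection of J appearing in a reduced word of v is a right descent of u. -/

import Mathlib

/-!
Write `u = π lu` and `v = π l` with `lu`, `l` reduced. Since `ℓ w = ℓ u + ℓ v`, the word `lu ++ l`
is a reduced word for `w`, and `lu ++ [j]` is a subword of it, so `u s_j ≤ w` by the subword
property. As `u s_j ∈ W_J`, maximality of `u` gives `u s_j ≤ u`, hence `ℓ (u s_j) ≤ ℓ u`, and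
`ℓ (u s_j) ≠ ℓ u` by parity.

The subword property follows, by induction on the word, from Humphreys' lemma (Reflection Groups
and Coxeter Groups, 5.9): `u ≤ w` implies `u s ≤ w` or `u s ≤ w s`. That lemma rests on the strong
exchange condition, proved with the permutation representation of `W` on `W × {±1}` from
Björner–Brenti (Combinatorics of Coxeter Groups, 1.4): the sign recorded by `π ω` at `t` is the
parity of the number of occurrences of `t` in the right inversion sequence of `ω`, and a reflection
`t` with `ℓ (π ω * t) < ℓ (π ω)` must occur, because `t` itself flips the sign at `t`.
-/

/-- The strong Bruhat order on a Coxeter group: the reflexive-transitive closure of the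
relation relating `a` to `a * t` (`t` a reflection) when the length increases. -/
def CoxeterSystem.bruhatLE {B W : Type*} [Group W] {M : CoxeterMatrix B}
    (cs : CoxeterSystem M W) : W → W → Prop :=
  Relation.ReflTransGen (fun a b => cs.length a < cs.length b ∧
    ∃ t : W, cs.IsReflection t ∧ b = a * t)

namespace CoxeterSystem

open List

variable {B W : Type*} [Group W] {M : CoxeterMatrix B} (cs : CoxeterSystem M W)

local prefix:100 "s " => cs.simple
local prefix:100 "π " => cs.wordProd
local prefix:100 "ℓ " => cs.length
local prefix:100 "ris " => cs.rightInvSeq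
local prefix:100 "lis " => cs.leftInvSeq

theorem rightInvSeq_eq_leftInvSeq_of_wordProd_eq_one {ω : List B} (h : π ω = 1) :
    ris ω = lis ω := by
  refine List.ext_getElem (by simp) fun k hk _ => ?_
  have hk' : k < ω.length := by simpa using hk
  rw [getElem_rightInvSeq _ _ _ hk', getElem_leftInvSeq _ _ _ hk', getElem?_eq_getElem hk']
  have hsplit : π (ω.take k) * s ω[k] * π (ω.drop (k + 1)) = 1 := by
    calc _ = π (ω.take k ++ ω[k] :: ω.drop (k + 1)) := by
          rw [wordProd_append, wordProd_cons, mul_assoc]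
      _ = 1 := by rw [← drop_eq_getElem_cons hk', take_append_drop, h]
  have : π (ω.drop (k + 1)) = s ω[k] * (π (ω.take k))⁻¹ := by
    rw [eq_inv_of_mul_eq_one_right hsplit, mul_inv_rev, inv_simple]
  simp only [Option.map_some, Option.getD_some, this, mul_inv_rev, inv_simple, inv_inv, mul_assoc,
    simple_mul_simple_cancel_left]

theorem prod_map_alternatingWord {G : Type*} [Monoid G] (f : B → G) (i j : B) (m : ℕ) :
    ((alternatingWord i j (2 * m)).map f).prod = (f i * f j) ^ m := by
  induction m with
  | zero => simp [alternatingWord]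
  | succ m ih =>
    rw [show 2 * (m + 1) = 2 * m + 1 + 1 by ring, alternatingWord_succ, alternatingWord_succ]
    simp [ih, pow_succ]

theorem even_count_leftInvSeq_alternatingWord [DecidableEq W] (i j : B) (x : W) :
    Even ((lis (alternatingWord i j (2 * M i j))).count x) := by
  set m := M i j
  set c : ℕ → W := fun k => π (alternatingWord j i (2 * k + 1))
  have hc : ∀ k, c (m + k) = c k := by
    intro k
    have hodd : ∀ n, ¬Even (2 * n + 1) := fun n => by simp [parity_simps]
    simp only [c, prod_alternatingWord_eq_mul_pow, hodd, if_false,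
      show ∀ n, (2 * n + 1) / 2 = n by omega, pow_add, simple_mul_simple_pow', one_mul, m]
  have hlis : lis (alternatingWord i j (2 * m)) = (range (2 * m)).map c :=
    List.ext_getElem (by simp) fun k hk _ => by
      simp [c, getElem_leftInvSeq_alternatingWord cs i j m k (by simpa using hk)]
  rw [hlis, two_mul, range_add, map_append, map_map, show c ∘ (m + ·) = c from funext hc,
    count_append]
  exact ⟨_, rfl⟩

theorem simple_mul_mul_simple_eq_simple_iff (i : B) (x : W) : s i * x * s i = s i ↔ x = s i := by
  constructor
  · intro h
    calc x = s i * (s i * x * s i) * s i := by simp [mul_assoc]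
      _ = s i := by rw [h, simple_mul_simple_cancel_right]
  · rintro rfl
    rw [simple_mul_simple_self, one_mul]

section SignRepresentation

variable [DecidableEq W]

def simpleSignPerm (i : B) : Equiv.Perm (W × ℤˣ) :=
  Function.Involutive.toPerm (fun p => (s i * p.1 * s i, if p.1 = s i then -p.2 else p.2)) <| by
    rintro ⟨x, e⟩
    simp only [simple_mul_mul_simple_eq_simple_iff]
    by_cases hx : x = s i <;> simp [hx, mul_assoc]

theorem simpleSignPerm_apply (i : B) (x : W) (e : ℤˣ) :
    simpleSignPerm cs i (x, e) = (s i * x * s i, if x = s i then -e else e) := rfl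

theorem prod_map_simpleSignPerm_apply (ω : List B) (x : W) (e : ℤˣ) :
    (ω.map (simpleSignPerm cs)).prod (x, e) =
      (π ω * x * (π ω)⁻¹, e * (-1) ^ (ris ω).count x) := by
  induction ω with
  | nil => simp
  | cons i ω ih =>
    have hcond : π ω * x * (π ω)⁻¹ = s i ↔ (π ω)⁻¹ * s i * π ω = x := by
      constructor <;> intro h <;> rw [← h] <;> group
    rw [map_cons, prod_cons, Equiv.Perm.mul_apply, ih, simpleSignPerm_apply, rightInvSeq,
      count_cons, wordProd_cons]
    refine Prod.ext (by simp only [mul_inv_rev, inv_simple]; group) ?_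
    simp only [hcond]
    by_cases hx : (π ω)⁻¹ * s i * π ω = x <;> simp [hx, pow_succ]

theorem isLiftable_simpleSignPerm : M.IsLiftable (simpleSignPerm cs) := by
  intro i j
  have hword : π (alternatingWord i j (2 * M i j)) = 1 := by
    simp [prod_alternatingWord_eq_mul_pow, simple_mul_simple_pow]
  ext ⟨x, e⟩ : 1
  rw [← prod_map_alternatingWord, prod_map_simpleSignPerm_apply,
    rightInvSeq_eq_leftInvSeq_of_wordProd_eq_one cs hword,
    (even_count_leftInvSeq_alternatingWord cs i j x).neg_one_pow, hword]
  simp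

def signRep : W →* Equiv.Perm (W × ℤˣ) :=
  cs.lift ⟨simpleSignPerm cs, isLiftable_simpleSignPerm cs⟩

theorem signRep_simple (i : B) : signRep cs (s i) = simpleSignPerm cs i :=
  cs.lift_apply_simple _ i

theorem signRep_wordProd_apply (ω : List B) (x : W) (e : ℤˣ) :
    signRep cs (π ω) (x, e) = (π ω * x * (π ω)⁻¹, e * (-1) ^ (ris ω).count x) := by
  have : signRep cs (π ω) = (ω.map (simpleSignPerm cs)).prod := by
    rw [wordProd, map_list_prod, map_map, show signRep cs ∘ cs.simple = simpleSignPerm cs from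
      funext (signRep_simple cs)]
  rw [this, prod_map_simpleSignPerm_apply]

theorem fst_signRep_apply (g x : W) (e : ℤˣ) : (signRep cs g (x, e)).1 = g * x * g⁻¹ := by
  obtain ⟨ω, rfl⟩ := cs.wordProd_surjective g
  rw [signRep_wordProd_apply]

theorem signRep_apply_neg (g x : W) (e : ℤˣ) :
    signRep cs g (x, -e) = Prod.map id Neg.neg (signRep cs g (x, e)) := by
  obtain ⟨ω, rfl⟩ := cs.wordProd_surjective g
  simp [signRep_wordProd_apply]

theorem signRep_apply_self_of_isReflection {t : W} (ht : cs.IsReflection t) :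
    signRep cs t (t, 1) = (t, -1) := by
  obtain ⟨q, i, rfl⟩ := ht
  set p := signRep cs q⁻¹ (q * s i * q⁻¹, 1)
  have hp : p = (s i, p.2) := Prod.ext (by simp only [p, fst_signRep_apply]; group) rfl
  have hback : signRep cs q p = (q * s i * q⁻¹, 1) := by
    simp only [p, ← Equiv.Perm.mul_apply, ← map_mul, mul_inv_cancel, map_one, Equiv.Perm.one_apply]
  have hsplit :
      signRep cs (q * s i * q⁻¹) = signRep cs q * simpleSignPerm cs i * signRep cs q⁻¹ := by
    rw [map_mul, map_mul, signRep_simple]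
  rw [hsplit]
  change signRep cs q (simpleSignPerm cs i p) = _
  rw [hp, simpleSignPerm_apply, if_pos rfl, simple_mul_simple_self, one_mul, signRep_apply_neg,
    ← hp, hback]
  rfl

end SignRepresentation

theorem mem_rightInvSeq_of_length_mul_lt {ω : List B} {t : W}
    (ht : cs.IsReflection t) (hlt : ℓ (π ω * t) < ℓ (π ω)) : t ∈ ris ω := by
  classical
  obtain ⟨β, hβ, hβω⟩ := cs.exists_isReduced (π ω * t)
  have ht_notMem : t ∉ ris β := fun hmem => by
    have hinv := (cs.isRightInversion_of_mem_rightInvSeq hβ hmem).2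
    rw [← hβω, mul_assoc, ht.mul_self, mul_one] at hinv
    exact hlt.not_gt hinv
  have hsign : signRep cs (π ω) (t, 1) = signRep cs (π β) (t, -1) := by
    rw [← signRep_apply_self_of_isReflection cs ht, ← Equiv.Perm.mul_apply, ← map_mul, ← hβω,
      mul_assoc, ht.mul_self, mul_one]
  rw [signRep_wordProd_apply, signRep_wordProd_apply, count_eq_zero.mpr ht_notMem] at hsign
  by_contra hmem
  rw [count_eq_zero.mpr hmem] at hsign
  simp at hsign

theorem exists_wordProd_eraseIdx_eq_mul {ω : List B} {t : W}
    (ht : cs.IsReflection t) (hlt : ℓ (π ω * t) < ℓ (π ω)) :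
    ∃ k < ω.length, π (ω.eraseIdx k) = π ω * t := by
  obtain ⟨k, hk, rfl⟩ := getElem_of_mem (cs.mem_rightInvSeq_of_length_mul_lt ht hlt)
  refine ⟨k, by simpa using hk, ?_⟩
  rw [← wordProd_mul_getD_rightInvSeq, getD_eq_getElem]

section BruhatOrder

variable {cs}

theorem bruhatLE_mul_of_length_lt {x t : W} (ht : cs.IsReflection t) (h : ℓ x < ℓ (x * t)) :
    cs.bruhatLE x (x * t) :=
  .single ⟨h, t, ht, rfl⟩

theorem length_le_of_bruhatLE {x y : W} (h : cs.bruhatLE x y) : ℓ x ≤ ℓ y := by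
  induction h with
  | refl => exact le_rfl
  | tail _ hstep ih => exact ih.trans hstep.1.le

theorem bruhatLE_inv {x y : W} (h : cs.bruhatLE x y) : cs.bruhatLE x⁻¹ y⁻¹ := by
  induction h with
  | refl => exact .refl
  | @tail b _ _ hstep ih =>
    obtain ⟨hlt, t, ht, rfl⟩ := hstep
    refine ih.tail ⟨by simpa only [length_inv] using hlt, _, ht.isReflection_inv.conj b, by group⟩

theorem bruhatLE_wordProd_eraseIdx {ω : List B} (hω : cs.IsReduced ω) (k : ℕ) :
    cs.bruhatLE (π (ω.eraseIdx k)) (π ω) := by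
  by_cases hk : k < ω.length
  · have hmem : (ris ω).getD k 1 ∈ ris ω := by
      rw [getD_eq_getElem _ _ (by simpa using hk)]
      exact getElem_mem _
    set t := (ris ω).getD k 1
    have ht : cs.IsReflection t := cs.isReflection_of_mem_rightInvSeq ω hmem
    have hωt : π (ω.eraseIdx k) * t = π ω := by
      rw [← wordProd_mul_getD_rightInvSeq, mul_assoc, getD_rightInvSeq_mul_self, mul_one]
    rw [← hωt]
    refine bruhatLE_mul_of_length_lt ht ?_
    rw [hωt, hω]
    calc ℓ (π (ω.eraseIdx k)) ≤ (ω.eraseIdx k).length := cs.length_wordProd_le _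
      _ < ω.length := by rw [length_eraseIdx, if_pos hk]; omega
  · rw [eraseIdx_of_length_le (not_lt.mp hk)]
    exact .refl

theorem mul_simple_eq_or_bruhatLE {u t : W} (ht : cs.IsReflection t) (hlt : ℓ u < ℓ (u * t))
    (i : B) : u * s i = u * t ∨ cs.bruhatLE (u * s i) (u * t * s i) := by
  -- strong exchange for `t` in the word `ω ++ [i]` of `u * t`, which need not be reduced
  obtain ⟨ω, hωred, hω⟩ := cs.exists_isReduced (u * t * s i)
  have hωi : π (ω ++ [i]) = u * t := by
    rw [wordProd_append, ← hω, wordProd_singleton, simple_mul_simple_cancel_right]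
  have hut : u * t * t = u := by rw [mul_assoc, ht.mul_self, mul_one]
  obtain ⟨k, hk, hku⟩ := cs.exists_wordProd_eraseIdx_eq_mul ht (ω := ω ++ [i])
    (by rwa [hωi, hut])
  rw [hωi, hut] at hku
  rw [length_append, length_singleton] at hk
  rcases (show k < ω.length ∨ k = ω.length by omega) with hk | rfl
  · right
    rw [eraseIdx_append_of_lt_length hk, wordProd_append, wordProd_singleton] at hku
    rw [hω, ← hku, simple_mul_simple_cancel_right]
    exact bruhatLE_wordProd_eraseIdx hωred k
  · left
    rw [eraseIdx_append_of_length_le le_rfl] at hku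
    simp only [Nat.sub_self, eraseIdx_cons_zero, append_nil] at hku
    calc u * s i = u * t * s i * s i := by rw [hω, hku]
      _ = u * t := cs.simple_mul_simple_cancel_right i

theorem mul_simple_bruhatLE_or {u w : W} (h : cs.bruhatLE u w) (i : B) :
    cs.bruhatLE (u * s i) w ∨ cs.bruhatLE (u * s i) (w * s i) := by
  induction h with
  | refl => exact .inr .refl
  | @tail z _ _ hstep ih =>
    obtain ⟨hlt, t, ht, rfl⟩ := hstep
    rcases ih with h | h
    · exact .inl (h.trans (bruhatLE_mul_of_length_lt ht hlt))
    · rcases mul_simple_eq_or_bruhatLE ht hlt i with heq | hle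
      · exact .inl (heq ▸ h)
      · exact .inr (h.trans hle)

theorem simple_mul_bruhatLE_or {u w : W} (h : cs.bruhatLE u w) (i : B) :
    cs.bruhatLE (s i * u) w ∨ cs.bruhatLE (s i * u) (s i * w) := by
  simpa [inv_simple] using (mul_simple_bruhatLE_or (bruhatLE_inv h) i).imp bruhatLE_inv bruhatLE_inv

theorem bruhatLE_wordProd_of_sublist {ω' ω : List B} (h : ω' <+ ω) (hω : cs.IsReduced ω) :
    cs.bruhatLE (π ω') (π ω) := by
  induction h with
  | slnil => exact .refl
  | @cons _ ρ i _ ih =>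
    have hstep : cs.bruhatLE (π ρ) (π (i :: ρ)) := bruhatLE_wordProd_eraseIdx hω 0
    exact (ih (by simpa using hω.drop 1)).trans hstep
  | @cons_cons _ ρ i _ ih =>
    have hstep : cs.bruhatLE (π ρ) (π (i :: ρ)) := bruhatLE_wordProd_eraseIdx hω 0
    rw [wordProd_cons] at hstep
    rw [wordProd_cons, wordProd_cons]
    rcases simple_mul_bruhatLE_or (ih (by simpa using hω.drop 1)) i with h | h
    · exact h.trans hstep
    · exact h

end BruhatOrder

end CoxeterSystem

theorem simple_in_v_is_right_descent_of_u_general {B W : Type*} [Group W]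
    {M : CoxeterMatrix B} (cs : CoxeterSystem M W) (J : Set B) (w u v : W)
    (hu_mem : u ∈ Subgroup.closure (cs.simple '' J))
    (hu_max : ∀ x ∈ Subgroup.closure (cs.simple '' J), cs.bruhatLE x w → cs.bruhatLE x u)
    (hw : w = u * v)
    (hlen : cs.length w = cs.length u + cs.length v) :
    ∀ l : List B, cs.IsReduced l → cs.wordProd l = v →
      ∀ j ∈ J, j ∈ l → cs.length (u * cs.simple j) < cs.length u := by
  intro l hl hlv j hjJ hjl
  obtain ⟨lu, hlu, rfl⟩ := cs.exists_isReduced u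
  subst hw hlv
  have hred : cs.IsReduced (lu ++ l) := by
    rw [CoxeterSystem.IsReduced, cs.wordProd_append, hlen, hlu, hl, List.length_append]
  have hle : cs.bruhatLE (cs.wordProd lu * cs.simple j) (cs.wordProd lu * cs.wordProd l) := by
    simpa only [cs.wordProd_append, cs.wordProd_singleton] using
      CoxeterSystem.bruhatLE_wordProd_of_sublist ((List.singleton_sublist.mpr hjl).append_left lu)
        hred
  have hmem : cs.wordProd lu * cs.simple j ∈ Subgroup.closure (cs.simple '' J) :=
    Subgroup.mul_mem _ hu_mem (Subgroup.subset_closure ⟨j, hjJ, rfl⟩)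
  exact (CoxeterSystem.length_le_of_bruhatLE (hu_max _ hmem hle)).lt_of_ne
    (cs.length_mul_simple_ne _ j)

/-- Let `w` be rationally smooth (the rank generating function of `[e, w]` is palindromic)
with parabolic decomposition `w = u * v`, where `u` is the maximal element of `W_J` below
`w` and `v` is a minimal-length coset representative. Then every simple reflection of `J`
appearing in a reduced word of `v` is a right descent of `u`. -/
theorem simple_in_v_is_right_descent_of_u {B W : Type*} [Group W] [Finite W]
    {M : CoxeterMatrix B} (cs : CoxeterSystem M W) (J : Set B) (w u v : W)
    (hu_mem : u ∈ Subgroup.closure (cs.simple '' J))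
    (hu_le : cs.bruhatLE u w)
    (hu_max : ∀ x ∈ Subgroup.closure (cs.simple '' J), cs.bruhatLE x w → cs.bruhatLE x u)
    (hv : ∀ j ∈ J, cs.length (cs.simple j * v) > cs.length v)
    (hw : w = u * v)
    (hlen : cs.length w = cs.length u + cs.length v)
    (hsmooth : ∀ i ≤ cs.length w,
      {x : W | cs.bruhatLE x w ∧ cs.length x = i}.ncard =
      {x : W | cs.bruhatLE x w ∧ cs.length x = cs.length w - i}.ncard) :
    ∀ l : List B, cs.IsReduced l → cs.wordProd l = v →
      ∀ j ∈ J, j ∈ l → cs.length (u * cs.simple j) < cs.length u :=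
  simple_in_v_is_right_descent_of_u_general cs J w u v hu_mem hu_max hw hlen
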